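/- arXiv:1310.7347 — 2 statements merged into one kernel-verified Lean document; each statement's English description precedes it below -/
import Mathlib

section
/- Let (W,S) be a Coxeter group and let w ∈ W with a fixed reduced expression w = s₁s₂⋯sₙ. Then v ≤ w in the Bruhat order if and only if there exist indices 1 ≤ j₁ < j₂ < ⋯ < jₚ ≤ n such that v = s₁⋯ŝ_{j₁}⋯ŝ_{jₚ}⋯sₙ (where ŝ denotes omission). Moreover, the indices can be chosen so that the resulting expression for v is reduced. -/
open scoped Classical

/-- The Bruhat order on a Coxeter group: `u ≤ v` iff `v` is obtained from `u` by
successively multiplying by reflections, increasing the length each time. -/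
def CoxeterSystem.bruhatLE {B W : Type*} [Group W] {M : CoxeterMatrix B}
    (cs : CoxeterSystem M W) (u v : W) : Prop :=
  Relation.ReflTransGen
    (fun x y => (∃ t, cs.IsReflection t ∧ y = t * x) ∧ cs.length x < cs.length y) u v

section aux
open CoxeterSystem List

variable {B W : Type*} [Group W] {M : CoxeterMatrix B} (cs : CoxeterSystem M W)


/-- The basic permutation of `W × ℤˣ` associated to a simple reflection. -/
noncomputable def pmFun (i : B) : W × ℤˣ → W × ℤˣ :=
  fun x => (cs.simple i * x.1 * cs.simple i, if x.1 = cs.simple i then -x.2 else x.2)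

lemma pmFun_invol (i : B) : Function.Involutive (pmFun cs i) := by
  rintro ⟨t, ε⟩
  simp only [pmFun]
  have h1 : cs.simple i * (cs.simple i * t * cs.simple i) * cs.simple i = t := by
    rw [← mul_assoc, ← mul_assoc, cs.simple_mul_simple_self, one_mul,
      mul_assoc, cs.simple_mul_simple_self, mul_one]
  have h2 : (cs.simple i * t * cs.simple i = cs.simple i) ↔ t = cs.simple i := by
    constructor
    · intro h
      have := congrArg (fun z => cs.simple i * z * cs.simple i) h
      simpa [h1, ← mul_assoc, cs.simple_mul_simple_self] using this
    · rintro rfl; rw [cs.simple_mul_simple_self, one_mul]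
  by_cases h : t = cs.simple i
  · simp [h, h2, h1]
  · simp [h, h2, h1]

noncomputable def pm (i : B) : Equiv.Perm (W × ℤˣ) := (pmFun_invol cs i).toPerm

lemma pm_apply (i : B) (x : W × ℤˣ) :
    pm cs i x = (cs.simple i * x.1 * cs.simple i, if x.1 = cs.simple i then -x.2 else x.2) := rfl

lemma pm_liftable : CoxeterMatrix.IsLiftable M (pm cs) := by
  intro i i'
  set p : W := cs.simple i * cs.simple i' with hp_def
  have hp : p ^ M i i' = 1 := cs.simple_mul_simple_pow i i'
  have hcomm : ∀ k : ℕ, cs.simple i' * p ^ k = (p ^ k)⁻¹ * cs.simple i' := by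
    intro k
    induction k with
    | zero => simp
    | succ k ih =>
      have hsp : cs.simple i' * p = p⁻¹ * cs.simple i' := by
        rw [hp_def, mul_inv_rev, cs.inv_simple, cs.inv_simple, mul_assoc]
      rw [pow_succ', ← mul_assoc, hsp, mul_assoc, ih, ← mul_assoc, ← mul_inv_rev, ← pow_succ,
        ← pow_succ']
  have coord : ∀ x : W, cs.simple i * (cs.simple i' * x * cs.simple i') * cs.simple i
      = p * x * p⁻¹ := by
    intro x
    rw [hp_def, mul_inv_rev, cs.inv_simple, cs.inv_simple]
    simp [mul_assoc]
  have form : ∀ (k : ℕ) (t : W) (ε : ℤˣ),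
      ((pm cs i * pm cs i') ^ k) (t, ε) =
        (p ^ k * t * (p ^ k)⁻¹,
          ε * ∏ r ∈ Finset.range (2 * k),
            (if p ^ r * t = cs.simple i' then (-1 : ℤˣ) else 1)) := by
    intro k
    induction k with
    | zero => simp
    | succ k ih =>
      intro t ε
      have e1 : (p ^ k * t * (p ^ k)⁻¹ = cs.simple i') ↔ (p ^ (2 * k) * t = cs.simple i') := by
        rw [mul_inv_eq_iff_eq_mul, hcomm k, eq_inv_mul_iff_mul_eq, ← mul_assoc, ← pow_add,
          ← two_mul]
      have e2 : (cs.simple i' * (p ^ k * t * (p ^ k)⁻¹) * cs.simple i' = cs.simple i)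
          ↔ (p ^ (2 * k + 1) * t = cs.simple i') := by
        have hconj : ∀ x y : W, (cs.simple i' * x * cs.simple i' = y)
            ↔ (x = cs.simple i' * y * cs.simple i') := by
          intro x y
          constructor
          · rintro rfl
            rw [← mul_assoc, ← mul_assoc, cs.simple_mul_simple_self, one_mul, mul_assoc,
              cs.simple_mul_simple_self, mul_one]
          · rintro rfl
            rw [← mul_assoc, ← mul_assoc, cs.simple_mul_simple_self, one_mul, mul_assoc,
              cs.simple_mul_simple_self, mul_one]
        have hsis : cs.simple i' * cs.simple i * cs.simple i' = p⁻¹ * cs.simple i' := by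
          rw [hp_def, mul_inv_rev, cs.inv_simple, cs.inv_simple, mul_assoc]
        rw [hconj, hsis, mul_inv_eq_iff_eq_mul, mul_assoc, hcomm k, ← mul_assoc, ← mul_inv_rev,
          ← pow_succ, eq_inv_mul_iff_mul_eq, ← mul_assoc, ← pow_add]
        have h : k + 1 + k = 2 * k + 1 := by omega
        rw [h]
      rw [pow_succ', Equiv.Perm.mul_apply, ih, Equiv.Perm.mul_apply, pm_apply, pm_apply]
      simp only [e1, e2, coord]
      have h2k : 2 * (k + 1) = (2 * k + 1) + 1 := by omega
      rw [h2k, Finset.prod_range_succ, Finset.prod_range_succ]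
      rw [Prod.mk.injEq]
      refine ⟨by group, ?_⟩
      by_cases h1 : p ^ (2 * k) * t = cs.simple i' <;>
        by_cases h2 : p ^ (2 * k + 1) * t = cs.simple i' <;>
        simp [h1, h2, mul_assoc]
  apply Equiv.ext
  rintro ⟨t, ε⟩
  have hper : ∀ r : ℕ, p ^ (M i i' + r) = p ^ r := fun r => by rw [pow_add, hp, one_mul]
  have hprod1 : (∏ r ∈ Finset.range (2 * M i i'),
      (if p ^ r * t = cs.simple i' then (-1 : ℤˣ) else 1)) = 1 := by
    rw [two_mul, Finset.prod_range_add]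
    have h : ∀ r ∈ Finset.range (M i i'),
        (if p ^ (M i i' + r) * t = cs.simple i' then (-1:ℤˣ) else 1)
        = (if p ^ r * t = cs.simple i' then (-1:ℤˣ) else 1) := fun r _ => by rw [hper]
    rw [Finset.prod_congr rfl h]
    exact Int.units_mul_self _
  rw [form, hp, hprod1]
  simp

noncomputable def phi : W →* Equiv.Perm (W × ℤˣ) := cs.lift ⟨pm cs, pm_liftable cs⟩

lemma phi_simple (i : B) : phi cs (cs.simple i) = pm cs i :=
  cs.lift_apply_simple (pm_liftable cs) i

/-- The sign of `t` at `w`. -/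
noncomputable def sgn (w t : W) : ℤˣ := (phi cs w (t, 1)).2

lemma phi_word (ω : List B) (t : W) (ε : ℤˣ) :
    phi cs (cs.wordProd ω) (t, ε)
      = (cs.wordProd ω * t * (cs.wordProd ω)⁻¹, sgn cs (cs.wordProd ω) t * ε) := by
  induction ω generalizing t ε with
  | nil => simp [sgn, cs.wordProd_nil]
  | cons i ρ ih =>
    rw [cs.wordProd_cons, map_mul, Equiv.Perm.mul_apply, ih, phi_simple, pm_apply]
    have hsgn : sgn cs (cs.simple i * cs.wordProd ρ) t
        = (if cs.wordProd ρ * t * (cs.wordProd ρ)⁻¹ = cs.simple i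
            then -sgn cs (cs.wordProd ρ) t else sgn cs (cs.wordProd ρ) t) := by
      rw [sgn, ← cs.wordProd_cons, cs.wordProd_cons, map_mul, Equiv.Perm.mul_apply, ih,
        phi_simple, pm_apply]
      by_cases h : cs.wordProd ρ * t * (cs.wordProd ρ)⁻¹ = cs.simple i <;> simp [h, sgn]
    have hfst : cs.simple i * (cs.wordProd ρ * t * (cs.wordProd ρ)⁻¹) * cs.simple i
        = (cs.simple i * cs.wordProd ρ) * t * (cs.simple i * cs.wordProd ρ)⁻¹ := by
      rw [mul_inv_rev, cs.inv_simple]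
      group
    rw [Prod.mk.injEq]
    refine ⟨hfst, ?_⟩
    rw [hsgn]
    by_cases h : cs.wordProd ρ * t * (cs.wordProd ρ)⁻¹ = cs.simple i <;> simp [h, mul_assoc]

lemma phi_apply (w t : W) (ε : ℤˣ) :
    phi cs w (t, ε) = (w * t * w⁻¹, sgn cs w t * ε) := by
  rcases cs.exists_reduced_word' w with ⟨ω, -, rfl⟩
  exact phi_word cs ω t ε

lemma sgn_eq_one_of_not_mem (ω : List B) (t : W) (h : t ∉ cs.rightInvSeq ω) :
    sgn cs (cs.wordProd ω) t = 1 := by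
  induction ω with
  | nil => simp [sgn, cs.wordProd_nil]
  | cons i ρ ih =>
    have hris : cs.rightInvSeq (i :: ρ)
        = ((cs.wordProd ρ)⁻¹ * cs.simple i * cs.wordProd ρ) :: cs.rightInvSeq ρ := rfl
    rw [hris, List.mem_cons, not_or] at h
    obtain ⟨h1, h2⟩ := h
    have hcond : ¬ (cs.wordProd ρ * t * (cs.wordProd ρ)⁻¹ = cs.simple i) := by
      intro hc
      apply h1
      rw [← hc]
      group
    rw [sgn, cs.wordProd_cons, map_mul, Equiv.Perm.mul_apply, phi_word, phi_simple, pm_apply]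
    simp only [if_neg hcond]
    rw [ih h2, mul_one]

lemma phi_isReflection {t : W} (ht : cs.IsReflection t) (ε : ℤˣ) :
    phi cs t (t, ε) = (t, -ε) := by
  obtain ⟨u, i, rfl⟩ := ht
  set t : W := u * cs.simple i * u⁻¹ with ht_def
  have h1 : phi cs u⁻¹ (t, ε) = (cs.simple i, sgn cs u⁻¹ t * ε) := by
    rw [phi_apply]
    congr 1
    rw [ht_def]
    group
  have h2 : ∀ δ : ℤˣ, phi cs u (cs.simple i, δ) = (t, sgn cs u (cs.simple i) * δ) := by
    intro δ
    rw [phi_apply, ht_def]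
  have hinv : sgn cs u (cs.simple i) * (sgn cs u⁻¹ t * ε) = ε := by
    have h : phi cs u (phi cs u⁻¹ (t, ε)) = (t, ε) := by
      rw [← Equiv.Perm.mul_apply, ← map_mul, mul_inv_cancel, map_one, Equiv.Perm.one_apply]
    rw [h1, h2] at h
    exact congrArg Prod.snd h
  have hsplit : phi cs t (t, ε) = phi cs u (phi cs (cs.simple i) (phi cs u⁻¹ (t, ε))) := by
    rw [← Equiv.Perm.mul_apply, ← Equiv.Perm.mul_apply, ← map_mul, ← map_mul, ht_def]
  rw [hsplit, h1, phi_simple, pm_apply]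
  simp only
  rw [if_true, cs.simple_mul_simple_self, one_mul, h2, mul_neg, hinv]

lemma mem_rightInvSeq_of_isRightInversion {w t : W} (h : cs.IsRightInversion w t)
    (ω : List B) (hw : cs.wordProd ω = w) : t ∈ cs.rightInvSeq ω := by
  obtain ⟨ht, hlen⟩ := h
  by_contra hmem
  have hone : sgn cs w t = 1 := hw ▸ sgn_eq_one_of_not_mem cs ω t hmem
  -- sgn w t = - sgn (w * t) t
  have hw' : w = (w * t) * t := by rw [mul_assoc, ht.mul_self, mul_one]
  have hneg : sgn cs w t = - sgn cs (w * t) t := by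
    have hstep : phi cs t (t, (1 : ℤˣ)) = (t, -1) := phi_isReflection cs ht 1
    have h1 : phi cs w (t, 1) = phi cs (w * t) (t, -1) := by
      rw [← hstep, ← Equiv.Perm.mul_apply, ← map_mul, ← hw']
    rw [phi_apply cs w t 1, phi_apply cs (w * t) t (-1)] at h1
    have h2 := congrArg Prod.snd h1
    simp only [mul_one, mul_neg] at h2
    rw [h2]
  -- sgn (w * t) t = 1
  obtain ⟨σ, hσred, hσ⟩ := cs.exists_reduced_word' (w * t)
  have hnm : t ∉ cs.rightInvSeq σ := by
    intro hmem'
    have hri := cs.isRightInversion_of_mem_rightInvSeq hσred hmem'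
    rw [← hσ] at hri
    have : cs.length (w * t * t) < cs.length (w * t) := hri.2
    rw [mul_assoc, ht.mul_self, mul_one] at this
    omega
  have h2 : sgn cs (w * t) t = 1 := by
    rw [hσ]
    exact sgn_eq_one_of_not_mem cs σ t hnm
  rw [hneg, h2] at hone
  exact absurd hone (by decide)

lemma mem_leftInvSeq_of_isLeftInversion {w t : W} (h : cs.IsLeftInversion w t)
    (ω : List B) (hw : cs.wordProd ω = w) : t ∈ cs.leftInvSeq ω := by
  have h' : cs.IsRightInversion w⁻¹ t := cs.isRightInversion_inv_iff.mpr h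
  have hmem : t ∈ cs.rightInvSeq ω.reverse :=
    mem_rightInvSeq_of_isRightInversion cs h' ω.reverse (by rw [cs.wordProd_reverse, hw])
  rw [cs.rightInvSeq_reverse] at hmem
  exact List.mem_reverse.mp hmem

/-- Strong exchange property (left version). -/
lemma strong_exchange_left (ω : List B) {t : W}
    (h : cs.IsLeftInversion (cs.wordProd ω) t) :
    ∃ j < ω.length, cs.wordProd (ω.eraseIdx j) = t * cs.wordProd ω := by
  have hmem := mem_leftInvSeq_of_isLeftInversion cs h ω rfl
  obtain ⟨j, hj, hget⟩ := List.mem_iff_getElem.mp hmem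
  rw [cs.length_leftInvSeq] at hj
  refine ⟨j, hj, ?_⟩
  rw [← cs.getD_leftInvSeq_mul_wordProd ω j]
  congr 1
  rw [List.getD_eq_getElem _ _ (by rwa [cs.length_leftInvSeq])]
  exact hget

lemma isReduced_tail {i : B} {ρ : List B} (h : cs.IsReduced (i :: ρ)) : cs.IsReduced ρ := by
  have := h.drop 1
  simpa using this

/-- Deletion property: every word has a reduced sublist with the same product. -/
lemma exists_reduced_sublist (ω : List B) :
    ∃ ω', ω'.Sublist ω ∧ cs.IsReduced ω' ∧ cs.wordProd ω' = cs.wordProd ω := by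
  induction ω with
  | nil => exact ⟨[], List.Sublist.refl _, by simp [CoxeterSystem.IsReduced], rfl⟩
  | cons i ρ ih =>
    obtain ⟨ρ', hsub, hred, hprod⟩ := ih
    rcases cs.length_simple_mul (cs.wordProd ρ') i with hup | hdown
    · refine ⟨i :: ρ', hsub.cons₂ i, ?_, ?_⟩
      · show cs.length (cs.wordProd (i :: ρ')) = _
        rw [cs.wordProd_cons, hup, hred]
        simp
      · rw [cs.wordProd_cons, cs.wordProd_cons, hprod]
    · have hne := cs.length_simple_mul_ne (cs.wordProd ρ') i
      have hlt : cs.length (cs.simple i * cs.wordProd ρ') < cs.length (cs.wordProd ρ') := by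
        omega
      have hinv : cs.IsLeftInversion (cs.wordProd ρ') (cs.simple i) :=
        ⟨cs.isReflection_simple i, hlt⟩
      obtain ⟨j, hj, hje⟩ := strong_exchange_left cs ρ' hinv
      refine ⟨ρ'.eraseIdx j, ((ρ'.eraseIdx_sublist j).trans hsub).trans
        (List.sublist_cons_self i ρ), ?_, ?_⟩
      · show cs.length (cs.wordProd (ρ'.eraseIdx j)) = _
        rw [hje]
        have h1 : (ρ'.eraseIdx j).length + 1 = ρ'.length := List.length_eraseIdx_add_one hj
        have h2 : cs.length (cs.wordProd ρ') = ρ'.length := hred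
        omega
      · rw [hje, cs.wordProd_cons, hprod]

/-- Key lemma: in the configuration of the lifting property, `y = s i * x`. -/
lemma lemD {x y t : W} (ht : cs.IsReflection t) (hyx : y = t * x)
    (hlen : cs.length y = cs.length x + 1) (i : B)
    (hx : cs.length (cs.simple i * x) = cs.length x + 1)
    (hy : cs.length (cs.simple i * y) + 1 = cs.length y) : y = cs.simple i * x := by
  obtain ⟨σ, hσred, hσ⟩ := cs.exists_reduced_word' (cs.simple i * y)
  have hyw : cs.wordProd (i :: σ) = y := by
    rw [cs.wordProd_cons, ← hσ, ← mul_assoc, cs.simple_mul_simple_self, one_mul]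
  have hredσ : cs.IsReduced (i :: σ) := by
    show cs.length (cs.wordProd (i :: σ)) = _
    rw [hyw]
    have h1 : cs.length (cs.simple i * y) = σ.length := hσ ▸ hσred
    simp only [List.length_cons]
    omega
  have hxty : x = t * y := by rw [hyx, ← mul_assoc, ht.mul_self, one_mul]
  have hinv : cs.IsLeftInversion (cs.wordProd (i :: σ)) t := by
    rw [hyw]
    exact ⟨ht, by rw [← hxty]; omega⟩
  obtain ⟨j, hj, hje⟩ := strong_exchange_left cs (i :: σ) hinv
  rw [hyw, ← hxty] at hje
  match j with
  | 0 =>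
    rw [List.eraseIdx_cons_zero] at hje
    rw [← hje, ← hσ, cs.simple_mul_simple_cancel_left]
  | (k+1) =>
    exfalso
    rw [List.eraseIdx_cons_succ, cs.wordProd_cons] at hje
    have hsx : cs.simple i * x = cs.wordProd (σ.eraseIdx k) := by
      rw [← hje, ← mul_assoc, cs.simple_mul_simple_self, one_mul]
    have h1 : cs.length (cs.simple i * x) ≤ (σ.eraseIdx k).length := by
      rw [hsx]; exact cs.length_wordProd_le _
    have hk : k < σ.length := by simpa using hj
    have h2 : (σ.eraseIdx k).length + 1 = σ.length := List.length_eraseIdx_add_one hk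
    have h3 : cs.length (cs.simple i * y) = σ.length := hσ ▸ hσred
    omega

/-- Augmentation: a strictly shorter reduced sublist can be extended by one Bruhat step. -/
lemma aug (ω : List B) : ∀ ω' : List B, cs.IsReduced ω → ω'.Sublist ω → cs.IsReduced ω' →
    ω'.length < ω.length →
    ∃ ω'', ω''.Sublist ω ∧ cs.IsReduced ω'' ∧ ω''.length = ω'.length + 1 ∧
      ∃ t, cs.IsReflection t ∧ cs.wordProd ω'' = t * cs.wordProd ω' := by
  induction ω with
  | nil => intro ω' _ _ _ h; simp at h
  | cons i ρ ih =>
    intro ω' hred hsub hred' hlen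
    have hredρ : cs.IsReduced ρ := isReduced_tail cs hred
    cases hsub with
    | cons _ h' =>
      by_cases hl : ω'.length = ρ.length
      · obtain rfl : ω' = ρ := h'.eq_of_length hl
        exact ⟨i :: ω', List.Sublist.refl _, hred, by simp,
          cs.simple i, cs.isReflection_simple i, cs.wordProd_cons i ω'⟩
      · have hlt : ω'.length < ρ.length := lt_of_le_of_ne h'.length_le hl
        obtain ⟨ω'', h1, h2, h3, t, ht, h4⟩ := ih ω' hredρ h' hred' hlt
        exact ⟨ω'', h1.trans (List.sublist_cons_self i ρ), h2, h3, t, ht, h4⟩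
    | @cons_cons τ _ _ h' =>
      have hredτ : cs.IsReduced τ := isReduced_tail cs hred'
      have hlt : τ.length < ρ.length := by simpa using hlen
      obtain ⟨ρ'', hsub'', hred'', hlen'', t, ht, hprod''⟩ := ih τ hredρ h' hredτ hlt
      have hℓx : cs.length (cs.wordProd τ) = τ.length := hredτ
      have hℓy : cs.length (cs.wordProd ρ'') = τ.length + 1 := by rw [hred'']; exact hlen''
      have hx : cs.length (cs.simple i * cs.wordProd τ) = cs.length (cs.wordProd τ) + 1 := by
        rw [← cs.wordProd_cons]
        have := hred'
        rw [CoxeterSystem.IsReduced] at this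
        rw [this]
        simp [hℓx]
      rcases cs.length_simple_mul (cs.wordProd ρ'') i with hup | hdown
      · -- good case : prepend i to ρ''
        refine ⟨i :: ρ'', hsub''.cons₂ i, ?_, by simp [hlen''], ?_⟩
        · show cs.length (cs.wordProd (i :: ρ'')) = _
          rw [cs.wordProd_cons, hup, hℓy]
          simp [hlen'']
        · refine ⟨cs.simple i * t * cs.simple i, ?_, ?_⟩
          · have := ht.conj (cs.simple i)
            rwa [cs.inv_simple] at this
          · rw [cs.wordProd_cons, hprod'', cs.wordProd_cons]
            simp [mul_assoc, cs.simple_mul_simple_cancel_left]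
      · -- bad case : use lemD
        have hne := cs.length_simple_mul_ne (cs.wordProd ρ'') i
        have hy : cs.length (cs.simple i * cs.wordProd ρ'') + 1
            = cs.length (cs.wordProd ρ'') := by omega
        have hkey : cs.wordProd ρ'' = cs.simple i * cs.wordProd τ :=
          lemD cs ht hprod'' (by omega) i hx hy
        have hprodeq : cs.wordProd ρ'' = cs.wordProd (i :: τ) := by
          rw [hkey, cs.wordProd_cons]
        by_cases hc : ρ''.length = ρ.length
        · obtain rfl : ρ'' = ρ := hsub''.eq_of_length hc
          refine ⟨i :: ρ'', List.Sublist.refl _, hred, by simp [hlen''], ?_⟩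
          exact ⟨cs.simple i, cs.isReflection_simple i, by rw [cs.wordProd_cons, hprodeq]⟩
        · have hlt2 : ρ''.length < ρ.length := lt_of_le_of_ne hsub''.length_le hc
          obtain ⟨ω₃, g1, g2, g3, t', ht', g4⟩ := ih ρ'' hredρ hsub'' hred'' hlt2
          refine ⟨ω₃, g1.trans (List.sublist_cons_self i ρ), g2,
            by simp only [List.length_cons]; omega, t', ht', ?_⟩
          rw [g4, hprodeq]

lemma fwd : ∀ (n : ℕ) (ω : List B), ω.length ≤ n → cs.IsReduced ω →
    ∀ v, cs.bruhatLE v (cs.wordProd ω) →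
    ∃ ω', ω'.Sublist ω ∧ cs.wordProd ω' = v ∧ cs.IsReduced ω' := by
  intro n
  induction n with
  | zero =>
    intro ω hlen hred v hv
    rcases (Relation.ReflTransGen.cases_tail hv) with h | ⟨u, h1, h2⟩
    · exact ⟨ω, List.Sublist.refl _, h.symm ▸ rfl, hred⟩
    · exfalso
      have h3 : cs.length (cs.wordProd ω) ≤ ω.length := cs.length_wordProd_le ω
      have := h2.2
      omega
  | succ n ih =>
    intro ω hlen hred v hv
    rcases (Relation.ReflTransGen.cases_tail hv) with h | ⟨u, h1, h2⟩
    · exact ⟨ω, List.Sublist.refl _, h.symm ▸ rfl, hred⟩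
    · obtain ⟨⟨t, ht, hwu⟩, hlt⟩ := h2
      have hu : t * cs.wordProd ω = u := by
        rw [hwu, ← mul_assoc, ht.mul_self, one_mul]
      have hinv : cs.IsLeftInversion (cs.wordProd ω) t := ⟨ht, by rw [hu]; exact hlt⟩
      obtain ⟨j, hj, hje⟩ := strong_exchange_left cs ω hinv
      obtain ⟨ω₂, hs2, hr2, hp2⟩ := exists_reduced_sublist cs (ω.eraseIdx j)
      have hp2' : cs.wordProd ω₂ = u := by rw [hp2, hje, hu]
      have hlen2 : ω₂.length ≤ n := by
        have e1 : cs.length (cs.wordProd ω₂) = ω₂.length := hr2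
        have e2 : cs.length (cs.wordProd ω) ≤ ω.length := cs.length_wordProd_le ω
        rw [hp2'] at e1
        have := hlt
        omega
      obtain ⟨ω', hs', hp', hr'⟩ := ih ω₂ hlen2 hr2 v (hp2' ▸ h1)
      exact ⟨ω', (hs'.trans hs2).trans (ω.eraseIdx_sublist j), hp', hr'⟩

lemma bwd : ∀ (d : ℕ) (ω ω' : List B), cs.IsReduced ω → ω'.Sublist ω → cs.IsReduced ω' →
    ω.length ≤ ω'.length + d → cs.bruhatLE (cs.wordProd ω') (cs.wordProd ω) := by
  intro d
  induction d with
  | zero =>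
    intro ω ω' hred hsub hred' hlen
    obtain rfl : ω' = ω := hsub.eq_of_length (le_antisymm hsub.length_le (by omega))
    exact Relation.ReflTransGen.refl
  | succ d ih =>
    intro ω ω' hred hsub hred' hlen
    by_cases h : ω'.length = ω.length
    · obtain rfl : ω' = ω := hsub.eq_of_length h
      exact Relation.ReflTransGen.refl
    · have hlt : ω'.length < ω.length := lt_of_le_of_ne hsub.length_le h
      obtain ⟨ω'', h1, h2, h3, t, ht, hp⟩ := aug cs ω ω' hred hsub hred' hlt
      have hstep : cs.length (cs.wordProd ω') < cs.length (cs.wordProd ω'') := by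
        have e1 : cs.length (cs.wordProd ω') = ω'.length := hred'
        have e2 : cs.length (cs.wordProd ω'') = ω''.length := h2
        omega
      exact Relation.ReflTransGen.head ⟨⟨t, ht, hp⟩, hstep⟩ (ih ω ω'' hred h1 h2 (by omega))

end aux

/-- **Subword property of the Bruhat order.** If `ω` is a reduced word for `w`, then
`v ≤ w` iff `v` is the product of some subword of `ω`; moreover the subword can be chosen
to be reduced. -/
theorem bruhat_le_iff_exists_sublist {B W : Type*} [Group W] {M : CoxeterMatrix B}
    (cs : CoxeterSystem M W) (ω : List B) (w : W)
    (hw : cs.wordProd ω = w) (hred : cs.IsReduced ω) (v : W) :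
    (cs.bruhatLE v w ↔ ∃ ω' : List B, ω'.Sublist ω ∧ cs.wordProd ω' = v) ∧
    (cs.bruhatLE v w →
      ∃ ω' : List B, ω'.Sublist ω ∧ cs.wordProd ω' = v ∧ cs.IsReduced ω') := by
  subst hw
  constructor
  · constructor
    · intro h
      obtain ⟨ω', h1, h2, h3⟩ := fwd cs ω.length ω le_rfl hred v h
      exact ⟨ω', h1, h2⟩
    · rintro ⟨ω', hsub, hv⟩
      obtain ⟨ω₀, s0, r0, p0⟩ := exists_reduced_sublist cs ω'
      have := bwd cs ω.length ω ω₀ hred (s0.trans hsub) r0 (by omega)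
      rwa [p0, hv] at this
  · intro h
    obtain ⟨ω', h1, h2, h3⟩ := fwd cs ω.length ω le_rfl hred v h
    exact ⟨ω', h1, h2, h3⟩
end

section
/- In the affine Weyl group W of type G̃₂ with generators r, s, t satisfying r² = s² = t² = e, (st)⁶ = (rt)² = (rs)³ = e, the element x_α := ststsr has length 6 and the element x_β := (tstsr)² has length 10; that is, the given words are reduced expressions. -/
set_option maxRecDepth 100000
set_option maxHeartbeats 4000000

/-- The Coxeter matrix of the affine Weyl group of type `G̃₂`, on generators
`0 = r`, `1 = s`, `2 = t`, with `m(s,t) = 6`, `m(r,t) = 2`, `m(r,s) = 3`. -/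
def G2affine : CoxeterMatrix (Fin 3) where
  M := !![1, 3, 2;
          3, 1, 6;
          2, 6, 1]
  off_diagonal := by
    intro i i' h
    fin_cases i <;> fin_cases i' <;> simp_all

/-- Elements of the affine group `GL₂(ℤ) ⋉ ℤ²`: linear part `!![a,b;c,d]`,
translation part `(x,y)`. (We do not require invertibility; this is a monoid.) -/
structure Aff2 where
  a : ℤ
  b : ℤ
  c : ℤ
  d : ℤ
  x : ℤ
  y : ℤ
  deriving DecidableEq

namespace Aff2

instance : One Aff2 := ⟨⟨1, 0, 0, 1, 0, 0⟩⟩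

instance : Mul Aff2 :=
  ⟨fun p q => ⟨p.a * q.a + p.b * q.c, p.a * q.b + p.b * q.d,
               p.c * q.a + p.d * q.c, p.c * q.b + p.d * q.d,
               p.a * q.x + p.b * q.y + p.x, p.c * q.x + p.d * q.y + p.y⟩⟩

theorem mul_def (p q : Aff2) :
    p * q = ⟨p.a * q.a + p.b * q.c, p.a * q.b + p.b * q.d,
             p.c * q.a + p.d * q.c, p.c * q.b + p.d * q.d,
             p.a * q.x + p.b * q.y + p.x, p.c * q.x + p.d * q.y + p.y⟩ := rfl

theorem one_def : (1 : Aff2) = ⟨1, 0, 0, 1, 0, 0⟩ := rfl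

instance : Monoid Aff2 where
  mul_assoc p q r := by
    simp only [mul_def, one_def, mk.injEq]
    refine ⟨by ring, by ring, by ring, by ring, by ring, by ring⟩
  one_mul p := by simp [mul_def, one_def]
  mul_one p := by simp [mul_def, one_def]

/-- The images of the three Coxeter generators `r`, `s`, `t`. -/
def gen : Fin 3 → Aff2 :=
  ![⟨-1, -1, 0, 1, -2, 0⟩, ⟨-1, 0, 3, 1, 0, 0⟩, ⟨1, 1, 0, -1, 0, 0⟩]

/-- Ball of radius `n` in the image of the Coxeter group. -/
def ball : ℕ → Finset Aff2
  | 0 => {1}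
  | n + 1 =>
      ball n ∪ (ball n).image (gen 0 * ·) ∪ (ball n).image (gen 1 * ·)
        ∪ (ball n).image (gen 2 * ·)

theorem ball_mono {n : ℕ} : ball n ⊆ ball (n + 1) := by
  intro m hm
  simp only [ball, Finset.mem_union]
  exact Or.inl (Or.inl (Or.inl hm))

theorem one_mem_ball (n : ℕ) : (1 : Aff2) ∈ ball n := by
  induction n with
  | zero => simp [ball]
  | succ n ih => exact ball_mono ih

theorem prod_mem_ball : ∀ (l : List (Fin 3)) (n : ℕ), l.length ≤ n →
    (l.map gen).prod ∈ ball n := by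
  intro l
  induction l with
  | nil => intro n _; simpa using one_mem_ball n
  | cons i l ih =>
      intro n hn
      simp only [List.length_cons] at hn
      obtain ⟨m, rfl⟩ : ∃ m, n = m + 1 := ⟨n - 1, by omega⟩
      have hmem := ih m (by omega)
      have : gen i * (l.map gen).prod ∈ ball (m + 1) := by
        simp only [ball, Finset.mem_union, Finset.mem_image]
        fin_cases i
        · exact Or.inl (Or.inl (Or.inr ⟨_, hmem, rfl⟩))
        · exact Or.inl (Or.inr ⟨_, hmem, rfl⟩)
        · exact Or.inr ⟨_, hmem, rfl⟩
      simpa using this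

theorem liftable : G2affine.IsLiftable gen := by
  show ∀ i i', (gen i * gen i') ^ G2affine.M i i' = 1
  decide

end Aff2

/-- In the affine Weyl group of type `G̃₂`, the element `x_α = ststsr` has length 6 and
the element `x_β = (tstsr)²` has length 10; i.e. the given words are reduced. -/
theorem length_xalpha_xbeta {W : Type*} [Group W] (cs : CoxeterSystem G2affine W) :
    cs.length (cs.wordProd [1, 2, 1, 2, 1, 0]) = 6 ∧
      cs.length (cs.wordProd [2, 1, 2, 1, 0, 2, 1, 2, 1, 0]) = 10 := by
  set φ : W →* Aff2 := cs.lift ⟨Aff2.gen, Aff2.liftable⟩ with hφ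
  have hsimple : ∀ i, φ (cs.simple i) = Aff2.gen i := fun i =>
    cs.lift_apply_simple Aff2.liftable i
  have hword : ∀ ω : List (Fin 3), φ (cs.wordProd ω) = (ω.map Aff2.gen).prod := by
    intro ω
    induction ω with
    | nil => simp [CoxeterSystem.wordProd_nil]
    | cons i ω ih => rw [CoxeterSystem.wordProd_cons, map_mul, hsimple, List.map_cons,
        List.prod_cons, ih]
  have key : ∀ (w : W) (n : ℕ), cs.length w ≤ n → φ w ∈ Aff2.ball n := by
    intro w n hn
    obtain ⟨ω, hlen, rfl⟩ := cs.exists_reduced_word w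
    rw [hword]
    exact Aff2.prod_mem_ball ω n (by have := hlen.eq; omega)
  constructor
  · have hub := cs.length_wordProd_le [1, 2, 1, 2, 1, 0]
    have hlb : ¬ cs.length (cs.wordProd [1, 2, 1, 2, 1, 0]) ≤ 5 := by
      intro h
      have := key _ 5 h
      rw [hword] at this
      revert this
      decide
    simp only [List.length] at hub
    omega
  · have hub := cs.length_wordProd_le [2, 1, 2, 1, 0, 2, 1, 2, 1, 0]
    have hlb : ¬ cs.length (cs.wordProd [2, 1, 2, 1, 0, 2, 1, 2, 1, 0]) ≤ 9 := by
      intro h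
      have := key _ 9 h
      rw [hword] at this
      revert this
      decide
    simp only [List.length] at hub
    omega
end
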